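/- arXiv:2209.02208 — 6 statements merged into one kernel-verified Lean document; each statement's English description precedes it below -/
import Mathlib

section
/- Let h be a symmetric nondegenerate real 3x3 matrix of Lorentzian signature (+,+,-) (i.e., congruent to diag(1,1,-1)). Then there exists a matrix B in the group Aut(g_I) = { [[A, *],[0,1]] : A ∈ GL(2,R), * ∈ R^2 } such that B^t h B equals one of: diag(1,-1,μ) with μ>0, diag(1,1,-μ) with μ>0, or [[1,0,0],[0,0,1],[0,1,0]]. -/
open Matrix

/-- Membership in `Aut(g_I)`: invertible matrices whose last row is `(0,0,1)`,
i.e. block matrices `[[A, v],[0, 1]]` with `A ∈ GL(2,ℝ)`, `v ∈ ℝ²`. -/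
def InAutGI (B : Matrix (Fin 3) (Fin 3) ℝ) : Prop :=
  IsUnit B.det ∧ B 2 0 = 0 ∧ B 2 1 = 0 ∧ B 2 2 = 1

namespace StmtAux

abbrev M3 := Matrix (Fin 3) (Fin 3) ℝ

def Goal (h : M3) : Prop :=
  ∃ B, InAutGI B ∧
      ((∃ μ : ℝ, 0 < μ ∧ Bᵀ * h * B = Matrix.diagonal ![1, -1, μ]) ∨
       (∃ μ : ℝ, 0 < μ ∧ Bᵀ * h * B = Matrix.diagonal ![1, 1, -μ]) ∨
       Bᵀ * h * B = !![1, 0, 0; 0, 0, 1; 0, 1, 0])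

def Pos (h : M3) : Prop := ∃ x : Fin 3 → ℝ, 0 < x ⬝ᵥ (h *ᵥ x)

lemma diag3 (x y z : ℝ) : Matrix.diagonal ![x, y, z] = !![x,0,0;0,y,0;0,0,z] := by
  ext i j
  fin_cases i <;> fin_cases j <;>
    simp [Matrix.diagonal_apply, Matrix.vecHead, Matrix.vecTail]

lemma inAut_mk (p q r s t u : ℝ) (hdet : p * t - q * s ≠ 0) :
    InAutGI !![p,q,r;s,t,u;0,0,1] := by
  refine ⟨?_, by simp, by simp, by simp⟩
  have : (!![p,q,r;s,t,u;0,0,1] : M3).det = p * t - q * s := by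
    simp [Matrix.det_fin_three]; try ring
  rw [this, isUnit_iff_ne_zero]; exact hdet

lemma inAut_mul {B C : M3} (hB : InAutGI B) (hC : InAutGI C) : InAutGI (B * C) := by
  obtain ⟨hBd, hB0, hB1, hB2⟩ := hB
  obtain ⟨hCd, hC0, hC1, hC2⟩ := hC
  refine ⟨by rw [Matrix.det_mul]; exact hBd.mul hCd, ?_, ?_, ?_⟩ <;>
    simp [Matrix.mul_apply, Fin.sum_univ_three, hB0, hB1, hB2, hC0, hC1, hC2]

lemma goal_congr {h : M3} (C : M3) (hC : InAutGI C) (hg : Goal (Cᵀ * h * C)) : Goal h := by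
  obtain ⟨B, hB, hres⟩ := hg
  refine ⟨C * B, inAut_mul hC hB, ?_⟩
  have e : (C * B)ᵀ * h * (C * B) = Bᵀ * (Cᵀ * h * C) * B := by
    rw [Matrix.transpose_mul]; noncomm_ring
  rw [e]; exact hres

lemma det_step {h C : M3} (hC : IsUnit C.det) (hd : h.det < 0) : (Cᵀ * h * C).det < 0 := by
  have hne : C.det ≠ 0 := hC.ne_zero
  rw [Matrix.det_mul, Matrix.det_mul, Matrix.det_transpose]
  nlinarith [mul_self_pos.mpr hne]

lemma pos_step {h C : M3} (hC : IsUnit C.det) (hp : Pos h) : Pos (Cᵀ * h * C) := by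
  obtain ⟨x, hx⟩ := hp
  refine ⟨C⁻¹ *ᵥ x, ?_⟩
  have hx' : C *ᵥ (C⁻¹ *ᵥ x) = x := by
    rw [Matrix.mulVec_mulVec, Matrix.mul_nonsing_inv _ hC, Matrix.one_mulVec]
  have e : (Cᵀ * h * C) *ᵥ (C⁻¹ *ᵥ x) = Cᵀ *ᵥ (h *ᵥ x) := by
    rw [← Matrix.mulVec_mulVec, ← Matrix.mulVec_mulVec, hx', Matrix.mulVec_mulVec]
  rw [e, Matrix.dotProduct_mulVec, Matrix.vecMul_transpose, hx']
  exact hx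

/- congruence computations -/

lemma diag_congr (a d f α β : ℝ) :
    (!![α,0,0;0,β,0;0,0,1] : M3)ᵀ * !![a,0,0;0,d,0;0,0,f] * !![α,0,0;0,β,0;0,0,1]
      = !![α*α*a, 0, 0; 0, β*β*d, 0; 0, 0, f] := by
  ext i j
  fin_cases i <;> fin_cases j <;>
    simp [Matrix.mul_apply, Fin.sum_univ_three, Matrix.transpose_apply,
      Matrix.vecHead, Matrix.vecTail] <;> (try field_simp) <;> (try ring)

lemma swap_congr (a d f α β : ℝ) :
    (!![0,α,0;β,0,0;0,0,1] : M3)ᵀ * !![a,0,0;0,d,0;0,0,f] * !![0,α,0;β,0,0;0,0,1]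
      = !![β*β*d, 0, 0; 0, α*α*a, 0; 0, 0, f] := by
  ext i j
  fin_cases i <;> fin_cases j <;>
    simp [Matrix.mul_apply, Fin.sum_univ_three, Matrix.transpose_apply,
      Matrix.vecHead, Matrix.vecTail] <;> (try field_simp) <;> (try ring)

lemma clear_e_congr (a d e f : ℝ) (hd : d ≠ 0) :
    (!![1,0,0;0,1,-e/d;0,0,1] : M3)ᵀ * !![a,0,0;0,d,e;0,e,f] * !![1,0,0;0,1,-e/d;0,0,1]
      = !![a,0,0;0,d,0;0,0,f - e*e/d] := by
  ext i j
  fin_cases i <;> fin_cases j <;>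
    simp [Matrix.mul_apply, Fin.sum_univ_three, Matrix.transpose_apply,
      Matrix.vecHead, Matrix.vecTail] <;> (try field_simp) <;> (try ring)

lemma hyp_congr (a b c d e f : ℝ) (ha : a ≠ 0) :
    (!![1,-b/a,-c/a;0,1,0;0,0,1] : M3)ᵀ * !![a,b,c;b,d,e;c,e,f] * !![1,-b/a,-c/a;0,1,0;0,0,1]
      = !![a,0,0;0,d - b*b/a, e - b*c/a;0,e - b*c/a, f - c*c/a] := by
  ext i j
  fin_cases i <;> fin_cases j <;>
    simp [Matrix.mul_apply, Fin.sum_univ_three, Matrix.transpose_apply,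
      Matrix.vecHead, Matrix.vecTail] <;> (try field_simp) <;> (try ring)

lemma rank1_congr (a e f α : ℝ) (he : e ≠ 0) :
    (!![α,0,0;0,1/e,-f/(2*e);0,0,1] : M3)ᵀ * !![a,0,0;0,0,e;0,e,f] * !![α,0,0;0,1/e,-f/(2*e);0,0,1]
      = !![α*α*a,0,0;0,0,1;0,1,0] := by
  ext i j
  fin_cases i <;> fin_cases j <;>
    simp [Matrix.mul_apply, Fin.sum_univ_three, Matrix.transpose_apply,
      Matrix.vecHead, Matrix.vecTail] <;> (try field_simp) <;> (try ring)

lemma swap01_congr (a b c d e f : ℝ) :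
    (!![0,1,0;1,0,0;0,0,1] : M3)ᵀ * !![a,b,c;b,d,e;c,e,f] * !![0,1,0;1,0,0;0,0,1]
      = !![d,b,e;b,a,c;e,c,f] := by
  ext i j
  fin_cases i <;> fin_cases j <;>
    simp [Matrix.mul_apply, Fin.sum_univ_three, Matrix.transpose_apply,
      Matrix.vecHead, Matrix.vecTail] <;> (try field_simp) <;> (try ring)

lemma shear_congr (b c e f : ℝ) :
    (!![1,0,0;1,1,0;0,0,1] : M3)ᵀ * !![0,b,c;b,0,e;c,e,f] * !![1,0,0;1,1,0;0,0,1]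
      = !![2*b,b,c+e;b,0,e;c+e,e,f] := by
  ext i j
  fin_cases i <;> fin_cases j <;>
    simp [Matrix.mul_apply, Fin.sum_univ_three, Matrix.transpose_apply,
      Matrix.vecHead, Matrix.vecTail] <;> (try field_simp) <;> (try ring)

lemma inv_sqrt_fact {a : ℝ} (ha : 0 < a) : (Real.sqrt a)⁻¹ * (Real.sqrt a)⁻¹ * a = 1 := by
  have h := Real.sqrt_pos.mpr ha
  field_simp
  exact (Real.sq_sqrt ha.le).symm

lemma inv_sqrt_ne {a : ℝ} (ha : 0 < a) : (Real.sqrt a)⁻¹ ≠ 0 := by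
  have h := Real.sqrt_pos.mpr ha
  positivity

/- the diagonal case -/

lemma core2 (a d f : ℝ) (hdet : (!![a,0,0;0,d,0;0,0,f] : M3).det < 0)
    (hp : Pos !![a,0,0;0,d,0;0,0,f]) : Goal !![a,0,0;0,d,0;0,0,f] := by
  have edet : (!![a,0,0;0,d,0;0,0,f] : M3).det = a * d * f := by
    simp [Matrix.det_fin_three]; try ring
  rw [edet] at hdet
  rcases lt_trichotomy a 0 with ha | ha | ha
  · rcases lt_trichotomy d 0 with hd | hd | hd
    · -- a<0, d<0 ⇒ f<0 : contradiction with positivity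
      have hf : f < 0 := by nlinarith [mul_pos_of_neg_of_neg ha hd]
      exfalso
      obtain ⟨x, hx⟩ := hp
      have ev : x ⬝ᵥ ((!![a,0,0;0,d,0;0,0,f] : M3) *ᵥ x)
          = a * (x 0 * x 0) + d * (x 1 * x 1) + f * (x 2 * x 2) := by
        simp [dotProduct, Matrix.mulVec, Fin.sum_univ_three,
          Matrix.vecHead, Matrix.vecTail]
        ring
      rw [ev] at hx
      nlinarith [mul_self_nonneg (x 0), mul_self_nonneg (x 1), mul_self_nonneg (x 2)]
    · exfalso; rw [hd] at hdet; norm_num at hdet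
    · -- a<0, d>0 ⇒ f>0 : swap, diag(1,-1,f)
      have hf : 0 < f := by nlinarith [mul_neg_of_neg_of_pos ha hd]
      have hna : 0 < -a := by linarith
      refine ⟨!![0,(Real.sqrt (-a))⁻¹,0;(Real.sqrt d)⁻¹,0,0;0,0,1],
        inAut_mk _ _ _ _ _ _ ?_, Or.inl ⟨f, hf, ?_⟩⟩
      · have := mul_ne_zero (inv_sqrt_ne hna) (inv_sqrt_ne hd)
        intro hcon; apply this; linarith
      · rw [swap_congr, diag3]
        have h1 : (Real.sqrt d)⁻¹ * (Real.sqrt d)⁻¹ * d = 1 := inv_sqrt_fact hd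
        have h2 : (Real.sqrt (-a))⁻¹ * (Real.sqrt (-a))⁻¹ * a = -1 := by
          have := inv_sqrt_fact hna; nlinarith
        rw [h1, h2]
  · exfalso; rw [ha] at hdet; norm_num at hdet
  · rcases lt_trichotomy d 0 with hd | hd | hd
    · -- a>0, d<0 ⇒ f>0 : diag(1,-1,f)
      have hf : 0 < f := by nlinarith [mul_neg_of_pos_of_neg ha hd]
      have hnd : 0 < -d := by linarith
      refine ⟨!![(Real.sqrt a)⁻¹,0,0;0,(Real.sqrt (-d))⁻¹,0;0,0,1],
        inAut_mk _ _ _ _ _ _ ?_, Or.inl ⟨f, hf, ?_⟩⟩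
      · have := mul_ne_zero (inv_sqrt_ne ha) (inv_sqrt_ne hnd)
        intro hcon; apply this; linarith
      · rw [diag_congr, diag3]
        have h1 : (Real.sqrt a)⁻¹ * (Real.sqrt a)⁻¹ * a = 1 := inv_sqrt_fact ha
        have h2 : (Real.sqrt (-d))⁻¹ * (Real.sqrt (-d))⁻¹ * d = -1 := by
          have := inv_sqrt_fact hnd; nlinarith
        rw [h1, h2]
    · exfalso; rw [hd] at hdet; norm_num at hdet
    · -- a>0, d>0 ⇒ f<0 : diag(1,1,-(-f))
      have hf : f < 0 := by nlinarith [mul_pos ha hd]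
      refine ⟨!![(Real.sqrt a)⁻¹,0,0;0,(Real.sqrt d)⁻¹,0;0,0,1],
        inAut_mk _ _ _ _ _ _ ?_, Or.inr (Or.inl ⟨-f, by linarith, ?_⟩)⟩
      · have := mul_ne_zero (inv_sqrt_ne ha) (inv_sqrt_ne hd)
        intro hcon; apply this; linarith
      · rw [diag_congr, diag3, neg_neg]
        have h1 : (Real.sqrt a)⁻¹ * (Real.sqrt a)⁻¹ * a = 1 := inv_sqrt_fact ha
        have h2 : (Real.sqrt d)⁻¹ * (Real.sqrt d)⁻¹ * d = 1 := inv_sqrt_fact hd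
        rw [h1, h2]

/- the rank-one case -/

lemma core1b (a e f : ℝ) (hdet : (!![a,0,0;0,0,e;0,e,f] : M3).det < 0) :
    Goal !![a,0,0;0,0,e;0,e,f] := by
  have edet : (!![a,0,0;0,0,e;0,e,f] : M3).det = -(a * (e * e)) := by
    simp [Matrix.det_fin_three]; try ring
  rw [edet] at hdet
  have he : e ≠ 0 := by
    intro hcon; rw [hcon] at hdet; norm_num at hdet
  have ha : 0 < a := by nlinarith [mul_self_nonneg e, mul_self_pos.mpr he]
  refine ⟨!![(Real.sqrt a)⁻¹,0,0;0,1/e,-f/(2*e);0,0,1],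
    inAut_mk _ _ _ _ _ _ ?_, Or.inr (Or.inr ?_)⟩
  · have := mul_ne_zero (inv_sqrt_ne ha) (one_div_ne_zero he)
    intro hcon; apply this; linarith
  · rw [rank1_congr a e f _ he, inv_sqrt_fact ha]

/- first column already cleared -/

lemma core1 (a d e f : ℝ) (hdet : (!![a,0,0;0,d,e;0,e,f] : M3).det < 0)
    (hp : Pos !![a,0,0;0,d,e;0,e,f]) : Goal !![a,0,0;0,d,e;0,e,f] := by
  by_cases hd : d = 0
  · subst hd; exact core1b a e f hdet
  · have hC : InAutGI !![1,0,0;0,1,-e/d;0,0,1] := inAut_mk _ _ _ _ _ _ (by norm_num)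
    apply goal_congr _ hC
    rw [clear_e_congr a d e f hd]
    apply core2
    · rw [← clear_e_congr a d e f hd]; exact det_step hC.1 hdet
    · rw [← clear_e_congr a d e f hd]; exact pos_step hC.1 hp

/- (0,0) entry nonzero -/

lemma core0 (a b c d e f : ℝ) (ha : a ≠ 0)
    (hdet : (!![a,b,c;b,d,e;c,e,f] : M3).det < 0)
    (hp : Pos !![a,b,c;b,d,e;c,e,f]) : Goal !![a,b,c;b,d,e;c,e,f] := by
  have hC : InAutGI !![1,-b/a,-c/a;0,1,0;0,0,1] := inAut_mk _ _ _ _ _ _ (by norm_num)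
  apply goal_congr _ hC
  rw [hyp_congr a b c d e f ha]
  apply core1
  · rw [← hyp_congr a b c d e f ha]; exact det_step hC.1 hdet
  · rw [← hyp_congr a b c d e f ha]; exact pos_step hC.1 hp

/- general symmetric matrix -/

lemma main (a b c d e f : ℝ)
    (hdet : (!![a,b,c;b,d,e;c,e,f] : M3).det < 0)
    (hp : Pos !![a,b,c;b,d,e;c,e,f]) : Goal !![a,b,c;b,d,e;c,e,f] := by
  by_cases ha : a = 0
  · by_cases hd : d = 0
    · by_cases hb : b = 0
      · exfalso
        subst ha; subst hd; subst hb
        have : (!![(0:ℝ),0,c;0,0,e;c,e,f] : M3).det = 0 := by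
          simp [Matrix.det_fin_three]; try ring
        rw [this] at hdet; norm_num at hdet
      · subst ha; subst hd
        have hC : InAutGI !![1,0,0;1,1,0;0,0,1] := inAut_mk _ _ _ _ _ _ (by norm_num)
        apply goal_congr _ hC
        rw [shear_congr b c e f]
        apply core0 _ _ _ _ _ _ (by intro hcon; apply hb; linarith)
        · rw [← shear_congr b c e f]; exact det_step hC.1 hdet
        · rw [← shear_congr b c e f]; exact pos_step hC.1 hp
    · have hC : InAutGI !![0,1,0;1,0,0;0,0,1] := inAut_mk _ _ _ _ _ _ (by norm_num)
      apply goal_congr _ hC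
      rw [swap01_congr a b c d e f]
      apply core0 _ _ _ _ _ _ hd
      · rw [← swap01_congr a b c d e f]; exact det_step hC.1 hdet
      · rw [← swap01_congr a b c d e f]; exact pos_step hC.1 hp
  · exact core0 a b c d e f ha hdet hp

end StmtAux

open StmtAux in
theorem stmt_10 (h : Matrix (Fin 3) (Fin 3) ℝ) (hsymm : hᵀ = h)
    (hsig : ∃ P : Matrix (Fin 3) (Fin 3) ℝ,
      IsUnit P.det ∧ h = Pᵀ * Matrix.diagonal ![1, 1, -1] * P) :
    ∃ B, InAutGI B ∧
      ((∃ μ : ℝ, 0 < μ ∧ Bᵀ * h * B = Matrix.diagonal ![1, -1, μ]) ∨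
       (∃ μ : ℝ, 0 < μ ∧ Bᵀ * h * B = Matrix.diagonal ![1, 1, -μ]) ∨
       Bᵀ * h * B = !![1, 0, 0; 0, 0, 1; 0, 1, 0]) := by
  have hdet : h.det < 0 := by
    obtain ⟨P, hP, rfl⟩ := hsig
    rw [Matrix.det_mul, Matrix.det_mul, Matrix.det_transpose]
    have e : (Matrix.diagonal ![1, 1, -1] : M3).det = -1 := by
      simp [Matrix.det_diagonal, Fin.prod_univ_three]
    rw [e]
    nlinarith [mul_self_pos.mpr hP.ne_zero]
  have hpos : Pos h := by
    obtain ⟨P, hP, rfl⟩ := hsig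
    apply pos_step hP
    refine ⟨![1,0,0], ?_⟩
    have : (![1,0,0] : Fin 3 → ℝ) ⬝ᵥ ((Matrix.diagonal ![1, 1, -1] : M3) *ᵥ ![1,0,0]) = 1 := by
      simp [dotProduct, Matrix.mulVec, Matrix.diagonal, Fin.sum_univ_three,
        Matrix.vecHead, Matrix.vecTail]
    rw [this]; norm_num
  have e10 : h 1 0 = h 0 1 := by
    have := congrFun (congrFun hsymm 1) 0
    simpa [Matrix.transpose_apply] using this.symm
  have e20 : h 2 0 = h 0 2 := by
    have := congrFun (congrFun hsymm 2) 0
    simpa [Matrix.transpose_apply] using this.symm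
  have e21 : h 2 1 = h 1 2 := by
    have := congrFun (congrFun hsymm 2) 1
    simpa [Matrix.transpose_apply] using this.symm
  have hh : h = !![h 0 0, h 0 1, h 0 2; h 0 1, h 1 1, h 1 2; h 0 2, h 1 2, h 2 2] := by
    have e := Matrix.eta_fin_three h
    rw [e10, e20, e21] at e
    exact e
  rw [hh] at hdet hpos
  have hgoal : Goal !![h 0 0, h 0 1, h 0 2; h 0 1, h 1 1, h 1 2; h 0 2, h 1 2, h 2 2] :=
    main _ _ _ _ _ _ hdet hpos
  obtain ⟨B, hB, hres⟩ := hgoal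
  exact ⟨B, hB, by rw [hh]; exact hres⟩
end

section
/- The matrices diag(1,-1,μ), diag(1,1,-μ') (μ,μ'>0) and [[1,0,0],[0,0,1],[0,1,0]] are pairwise non-congruent under the group Aut(g_I) = { [[A, v],[0,1]] : A ∈ GL(2,R), v ∈ R^2 }; moreover diag(1,-1,μ) is Aut(g_I)-congruent to diag(1,-1,μ') if and only if μ = μ', and similarly for diag(1,1,-μ). -/
open Matrix

/-- `Aut(g_I)`-congruence of symmetric matrices. -/
def AutGICongr (M M' : Matrix (Fin 3) (Fin 3) ℝ) : Prop :=
  ∃ B, InAutGI B ∧ Bᵀ * M * B = M'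

lemma entry_diag (x y z : ℝ) (B M' : Matrix (Fin 3) (Fin 3) ℝ)
    (hB : Bᵀ * (Matrix.diagonal ![x,y,z]) * B = M') (i j : Fin 3) :
    x * B 0 i * B 0 j + y * B 1 i * B 1 j + z * B 2 i * B 2 j = M' i j := by
  have := congrFun (congrFun hB i) j
  simp [Matrix.mul_apply, Fin.sum_univ_three, Matrix.diagonal_apply, Matrix.transpose_apply] at this
  linarith [this]

lemma entry_F (B M' : Matrix (Fin 3) (Fin 3) ℝ)
    (hB : Bᵀ * !![1, 0, 0; 0, 0, 1; 0, 1, 0] * B = M') (i j : Fin 3) :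
    B 0 i * B 0 j + B 1 i * B 2 j + B 2 i * B 1 j = M' i j := by
  have := congrFun (congrFun hB i) j
  simp [Matrix.mul_apply, Fin.sum_univ_three, Matrix.transpose_apply] at this
  linarith [this]

lemma detB_ne (B : Matrix (Fin 3) (Fin 3) ℝ) (h : InAutGI B) :
    B 0 0 * B 1 1 - B 0 1 * B 1 0 ≠ 0 := by
  obtain ⟨hu, h0, h1, h2⟩ := h
  have hd : B.det = B 0 0 * B 1 1 - B 0 1 * B 1 0 := by
    rw [Matrix.det_fin_three, h0, h1, h2]; ring
  rw [hd] at hu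
  exact hu.ne_zero

lemma autGICongr_refl (M : Matrix (Fin 3) (Fin 3) ℝ) : AutGICongr M M := by
  refine ⟨1, ⟨?_, ?_, ?_, ?_⟩, ?_⟩ <;> simp [Matrix.one_apply]

theorem stmt_11 (μ μ' : ℝ) (hμ : 0 < μ) (hμ' : 0 < μ') :
    (¬ AutGICongr (Matrix.diagonal ![1, -1, μ]) (Matrix.diagonal ![1, 1, -μ'])) ∧
    (¬ AutGICongr (Matrix.diagonal ![1, 1, -μ]) (Matrix.diagonal ![1, -1, μ'])) ∧
    (¬ AutGICongr (Matrix.diagonal ![1, -1, μ]) !![1, 0, 0; 0, 0, 1; 0, 1, 0]) ∧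
    (¬ AutGICongr !![1, 0, 0; 0, 0, 1; 0, 1, 0] (Matrix.diagonal ![1, -1, μ])) ∧
    (¬ AutGICongr (Matrix.diagonal ![1, 1, -μ]) !![1, 0, 0; 0, 0, 1; 0, 1, 0]) ∧
    (¬ AutGICongr !![1, 0, 0; 0, 0, 1; 0, 1, 0] (Matrix.diagonal ![1, 1, -μ])) ∧
    (AutGICongr (Matrix.diagonal ![1, -1, μ]) (Matrix.diagonal ![1, -1, μ']) ↔ μ = μ') ∧
    (AutGICongr (Matrix.diagonal ![1, 1, -μ]) (Matrix.diagonal ![1, 1, -μ']) ↔ μ = μ') := by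
  refine ⟨?_, ?_, ?_, ?_, ?_, ?_, ?_, ?_⟩
  · -- diag(1,-1,μ) vs diag(1,1,-μ')
    rintro ⟨B, hIn, hB⟩
    obtain ⟨hu, h0, h1, h2⟩ := hIn
    have e00 := entry_diag 1 (-1) μ B _ hB 0 0
    have e01 := entry_diag 1 (-1) μ B _ hB 0 1
    have e11 := entry_diag 1 (-1) μ B _ hB 1 1
    simp only [h0, h1, h2] at e00 e01 e11
    simp [Matrix.diagonal_apply] at e00 e01 e11
    nlinarith [e00, e01, e11, sq_nonneg (B 0 0 * B 1 1 - B 0 1 * B 1 0)]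
  · -- diag(1,1,-μ) vs diag(1,-1,μ')
    rintro ⟨B, hIn, hB⟩
    obtain ⟨hu, h0, h1, h2⟩ := hIn
    have e11 := entry_diag 1 1 (-μ) B _ hB 1 1
    simp only [h0, h1, h2] at e11
    simp [Matrix.diagonal_apply] at e11
    nlinarith [e11, sq_nonneg (B 0 1), sq_nonneg (B 1 1)]
  · -- diag(1,-1,μ) vs F
    rintro ⟨B, hIn, hB⟩
    have hdet := detB_ne B hIn
    obtain ⟨hu, h0, h1, h2⟩ := hIn
    have e00 := entry_diag 1 (-1) μ B _ hB 0 0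
    have e01 := entry_diag 1 (-1) μ B _ hB 0 1
    have e11 := entry_diag 1 (-1) μ B _ hB 1 1
    simp only [h0, h1, h2] at e00 e01 e11
    norm_num at e00 e01 e11
    have : (B 0 0 * B 1 1 - B 0 1 * B 1 0)^2 = 0 := by nlinarith [e00, e01, e11]
    exact hdet (by nlinarith [this])
  · -- F vs diag(1,-1,μ)
    rintro ⟨B, hIn, hB⟩
    obtain ⟨hu, h0, h1, h2⟩ := hIn
    have e11 := entry_F B _ hB 1 1
    simp only [h0, h1, h2] at e11
    simp [Matrix.diagonal_apply] at e11
    nlinarith [e11, sq_nonneg (B 0 1)]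
  · -- diag(1,1,-μ) vs F
    rintro ⟨B, hIn, hB⟩
    have hdet := detB_ne B hIn
    obtain ⟨hu, h0, h1, h2⟩ := hIn
    have e00 := entry_diag 1 1 (-μ) B _ hB 0 0
    have e01 := entry_diag 1 1 (-μ) B _ hB 0 1
    have e11 := entry_diag 1 1 (-μ) B _ hB 1 1
    simp only [h0, h1, h2] at e00 e01 e11
    norm_num at e00 e01 e11
    have : (B 0 0 * B 1 1 - B 0 1 * B 1 0)^2 = 0 := by nlinarith [e00, e01, e11]
    exact hdet (by nlinarith [this])
  · -- F vs diag(1,1,-μ)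
    rintro ⟨B, hIn, hB⟩
    obtain ⟨hu, h0, h1, h2⟩ := hIn
    have e00 := entry_F B _ hB 0 0
    have e01 := entry_F B _ hB 0 1
    have e11 := entry_F B _ hB 1 1
    simp only [h0, h1, h2] at e00 e01 e11
    simp [Matrix.diagonal_apply] at e00 e01 e11
    rcases e01 with h | h <;> nlinarith [e00, e11]
  · -- diag(1,-1,μ) ~ diag(1,-1,μ') ↔ μ = μ'
    constructor
    · rintro ⟨B, hIn, hB⟩
      have hdet := detB_ne B hIn
      obtain ⟨hu, h0, h1, h2⟩ := hIn
      have e00 := entry_diag 1 (-1) μ B _ hB 0 0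
      have e01 := entry_diag 1 (-1) μ B _ hB 0 1
      have e11 := entry_diag 1 (-1) μ B _ hB 1 1
      have e02 := entry_diag 1 (-1) μ B _ hB 0 2
      have e12 := entry_diag 1 (-1) μ B _ hB 1 2
      have e22 := entry_diag 1 (-1) μ B _ hB 2 2
      simp only [h0, h1, h2] at e00 e01 e11 e02 e12 e22
      norm_num [Matrix.diagonal_apply, Fin.ext_iff] at e00 e01 e11 e02 e12 e22
      have hp : (B 0 0 * B 1 1 - B 0 1 * B 1 0) * B 0 2 = 0 := by
        linear_combination B 1 1 * e02 - B 1 0 * e12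
      have hq : (B 0 0 * B 1 1 - B 0 1 * B 1 0) * B 1 2 = 0 := by
        linear_combination B 0 1 * e02 - B 0 0 * e12
      have hp0 : B 0 2 = 0 := by
        rcases mul_eq_zero.mp hp with h | h
        · exact absurd h hdet
        · exact h
      have hq0 : B 1 2 = 0 := by
        rcases mul_eq_zero.mp hq with h | h
        · exact absurd h hdet
        · exact h
      rw [hp0, hq0] at e22
      norm_num at e22
      change _ = μ' at e22
      linarith [e22]
    · rintro rfl; exact autGICongr_refl _
  · -- diag(1,1,-μ) ~ diag(1,1,-μ') ↔ μ = μ'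
    constructor
    · rintro ⟨B, hIn, hB⟩
      have hdet := detB_ne B hIn
      obtain ⟨hu, h0, h1, h2⟩ := hIn
      have e02 := entry_diag 1 1 (-μ) B _ hB 0 2
      have e12 := entry_diag 1 1 (-μ) B _ hB 1 2
      have e22 := entry_diag 1 1 (-μ) B _ hB 2 2
      simp only [h0, h1, h2] at e02 e12 e22
      norm_num [Matrix.diagonal_apply, Fin.ext_iff] at e02 e12 e22
      have hp : (B 0 0 * B 1 1 - B 0 1 * B 1 0) * B 0 2 = 0 := by
        linear_combination B 1 1 * e02 - B 1 0 * e12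
      have hq : (B 0 0 * B 1 1 - B 0 1 * B 1 0) * B 1 2 = 0 := by
        linear_combination B 0 0 * e12 - B 0 1 * e02
      have hp0 : B 0 2 = 0 := by
        rcases mul_eq_zero.mp hp with h | h
        · exact absurd h hdet
        · exact h
      have hq0 : B 1 2 = 0 := by
        rcases mul_eq_zero.mp hq with h | h
        · exact absurd h hdet
        · exact h
      rw [hp0, hq0] at e22
      norm_num at e22
      change _ = -μ' at e22
      linarith [e22]
    · rintro rfl; exact autGICongr_refl _
end

section
/- Fix c > 1 and let Aut(g_c) = { [[β-α, -cα, x],[α, β+α, y],[0,0,1]] : α,β,x,y ∈ R, β²+(c-1)α² ≠ 0 }. For μ,μ'>0 and τ,τ' < 1, the matrices M = [[1,1,0],[1,τ,0],[0,0,μ]] and M' = [[1,1,0],[1,τ',0],[0,0,μ']] are Aut(g_c)-congruent (i.e., B^t M B = M' for some B ∈ Aut(g_c)) if and only if μ = μ' and τ = τ'. -/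
/-
Write `B = [[β-α, -cα, x], [α, β+α, y], [0, 0, 1]]` and compare the entries of `Bᵀ M B` with `M'`.
The (0,0) and (0,1) entries differ by `(τ - c) α β`, so `α β = 0`; `β = 0` would force
`(τ - 1) α² = 1`, impossible for `τ < 1`. Hence `α = 0`, `β² = 1`, and the (0,2), (1,2) entries
give `x + y = x + τ y = 0`, so `x = y = 0`. Then `B = diag(β, β, 1)` with `β = ±1`, so `M' = Bᵀ M B = M`.
-/

open Matrix

/-- Membership in `Aut(g_c)`. -/
def InAutGc (c : ℝ) (B : Matrix (Fin 3) (Fin 3) ℝ) : Prop :=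
  ∃ α β x y : ℝ, β ^ 2 + (c - 1) * α ^ 2 ≠ 0 ∧
    B = !![β - α, -(c * α), x; α, β + α, y; 0, 0, 1]

lemma InAutGc.one (c : ℝ) : InAutGc c 1 :=
  ⟨0, 1, 0, 0, by norm_num, by simp [one_fin_three]⟩

lemma autGc_transpose_mul_mul (c τ μ α β x y : ℝ) :
    (!![β - α, -(c * α), x; α, β + α, y; 0, 0, 1])ᵀ * !![1, 1, 0; 1, τ, 0; 0, 0, μ] *
        !![β - α, -(c * α), x; α, β + α, y; 0, 0, 1] =
      !![β ^ 2 + (τ - 1) * α ^ 2, β ^ 2 + (τ - 1) * α ^ 2 + (τ - c) * (α * β),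
          (β - α) * (x + y) + α * (x + τ * y);
        β ^ 2 + (τ - 1) * α ^ 2 + (τ - c) * (α * β),
          c ^ 2 * α ^ 2 - 2 * c * α * (β + α) + τ * (β + α) ^ 2,
          -(c * α) * (x + y) + (β + α) * (x + τ * y);
        (β - α) * (x + y) + α * (x + τ * y), -(c * α) * (x + y) + (β + α) * (x + τ * y),
          x ^ 2 + 2 * x * y + τ * y ^ 2 + μ] := by
  ext i j
  fin_cases i <;> fin_cases j <;> simp [mul_apply, Fin.sum_univ_succ] <;> ring

lemma autGc_params_of_congr {c τ α β x y : ℝ} (hτ : τ < 1) (hτc : τ ≠ c)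
    (h00 : β ^ 2 + (τ - 1) * α ^ 2 = 1)
    (h01 : β ^ 2 + (τ - 1) * α ^ 2 + (τ - c) * (α * β) = 1)
    (h02 : (β - α) * (x + y) + α * (x + τ * y) = 0)
    (h12 : -(c * α) * (x + y) + (β + α) * (x + τ * y) = 0) :
    α = 0 ∧ β ^ 2 = 1 ∧ x = 0 ∧ y = 0 := by
  have hαβ : α * β = 0 := by
    have : (τ - c) * (α * β) = 0 := by linarith
    exact (mul_eq_zero.1 this).resolve_left (sub_ne_zero.2 hτc)
  have hα : α = 0 := by
    refine (mul_eq_zero.1 hαβ).resolve_right fun hβ => ?_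
    subst hβ
    nlinarith [sq_nonneg α]
  subst hα
  have hβ : β ≠ 0 := by rintro rfl; norm_num at h00
  have hxy : x + y = 0 := by simpa [hβ] using h02
  have hxτy : x + τ * y = 0 := by simpa [hβ] using h12
  have hy : y = 0 := by
    have : (1 - τ) * y = 0 := by linarith
    exact (mul_eq_zero.1 this).resolve_left (by linarith)
  exact ⟨rfl, by simpa using h00, by linarith, hy⟩

theorem stmt_12_general (c μ μ' τ τ' : ℝ) (hc : 1 < c) (hτ : τ < 1) :
    (∃ B, InAutGc c B ∧
        Bᵀ * !![1, 1, 0; 1, τ, 0; 0, 0, μ] * B = !![1, 1, 0; 1, τ', 0; 0, 0, μ'])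
      ↔ (μ = μ' ∧ τ = τ') := by
  constructor
  · rintro ⟨B, ⟨α, β, x, y, -, rfl⟩, hB⟩
    rw [autGc_transpose_mul_mul] at hB
    simp only [EmbeddingLike.apply_eq_iff_eq, vecCons_inj, and_true] at hB
    obtain ⟨⟨h00, h01, h02⟩, ⟨-, h11, h12⟩, -, -, h22⟩ := hB
    obtain ⟨rfl, hβ, rfl, rfl⟩ := autGc_params_of_congr hτ (by linarith) h00 h01 h02 h12
    constructor
    · linarith
    · linear_combination h11 - τ * hβ
  · rintro ⟨rfl, rfl⟩
    exact ⟨1, InAutGc.one c, by simp⟩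

theorem stmt_12 (c μ μ' τ τ' : ℝ) (hc : 1 < c) (hμ : 0 < μ) (hμ' : 0 < μ')
    (hτ : τ < 1) (hτ' : τ' < 1) :
    (∃ B, InAutGc c B ∧
        Bᵀ * !![1, 1, 0; 1, τ, 0; 0, 0, μ] * B = !![1, 1, 0; 1, τ', 0; 0, 0, μ'])
      ↔ (μ = μ' ∧ τ = τ') :=
  stmt_12_general c μ μ' τ τ' hc hτ
end

section
/- Fix c > 1 and let Aut(g_c) = { [[β-α, -cα, x],[α, β+α, y],[0,0,1]] : α,β,x,y ∈ R, β²+(c-1)α² ≠ 0 }. For τ > 1 and μ > 0, the matrix [[1,1,0],[1,τ,0],[0,0,μ]] is Aut(g_c)-congruent to [[1,1,0],[1,τ',0],[0,0,μ]] where τ' = 1 + (c-1)²/(τ-1). -/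
open Matrix

def autGcOfAlpha (c α : ℝ) : Matrix (Fin 3) (Fin 3) ℝ :=
  !![-α, -(c * α), 0; α, α, 0; 0, 0, 1]

theorem inAutGc_autGcOfAlpha {c α : ℝ} (hc : c ≠ 1) (hα : α ≠ 0) :
    InAutGc c (autGcOfAlpha c α) :=
  ⟨α, 0, 0, 0, by simp [sub_ne_zero.mpr hc, hα], by simp [autGcOfAlpha]⟩

theorem autGcOfAlpha_transpose_mul_mul (c τ μ α : ℝ) :
    (autGcOfAlpha c α)ᵀ * !![1, 1, 0; 1, τ, 0; 0, 0, μ] * autGcOfAlpha c α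
      = !![α ^ 2 * (τ - 1), α ^ 2 * (τ - 1), 0;
          α ^ 2 * (τ - 1), α ^ 2 * (τ - 1) + α ^ 2 * (c - 1) ^ 2, 0;
          0, 0, μ] := by
  ext i j
  fin_cases i <;> fin_cases j <;>
    simp [autGcOfAlpha, Matrix.mul_apply, Fin.sum_univ_succ] <;> ring

theorem stmt_13_general (c τ μ : ℝ) (hc : 1 < c) (hτ : 1 < τ) :
    ∃ B, InAutGc c B ∧
      Bᵀ * !![1, 1, 0; 1, τ, 0; 0, 0, μ] * B
        = !![1, 1, 0; 1, 1 + (c - 1) ^ 2 / (τ - 1), 0; 0, 0, μ] := by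
  have hτ' : 0 < τ - 1 := sub_pos.mpr hτ
  set α := (√(τ - 1))⁻¹
  have hα_sq : α ^ 2 = (τ - 1)⁻¹ := by rw [inv_pow, Real.sq_sqrt hτ'.le]
  have hα_ne : α ≠ 0 := inv_ne_zero (Real.sqrt_pos.mpr hτ').ne'
  refine ⟨autGcOfAlpha c α, inAutGc_autGcOfAlpha hc.ne' hα_ne, ?_⟩
  have hs : α ^ 2 * (τ - 1) = 1 := by rw [hα_sq, inv_mul_cancel₀ hτ'.ne']
  have ht : α ^ 2 * (c - 1) ^ 2 = (c - 1) ^ 2 / (τ - 1) := by rw [hα_sq, inv_mul_eq_div]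
  rw [autGcOfAlpha_transpose_mul_mul, hs, ht]

theorem stmt_13 (c τ μ : ℝ) (hc : 1 < c) (hτ : 1 < τ) (hμ : 0 < μ) :
    ∃ B, InAutGc c B ∧
      Bᵀ * !![1, 1, 0; 1, τ, 0; 0, 0, μ] * B
        = !![1, 1, 0; 1, 1 + (c - 1) ^ 2 / (τ - 1), 0; 0, 0, μ] :=
  stmt_13_general c τ μ hc hτ
end

section
/- Let μ > 0 and consider the 3-dimensional metric Lie algebra with orthonormal basis {y1,y2,y3} (signature (+,+,-)) and brackets [y1,y2] = -(1/√μ) y1, [y2,y3] = (1/√μ) y3, [y3,y1] = 0. Then its Ricci operator equals -(2/μ) times the identity, the scalar curvature is -6/μ, and all sectional curvatures κ(y1,y2), κ(y2,y3), κ(y3,y1) equal -1/μ; in particular the metric has constant negative sectional curvature. -/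
/-- Curvature tensor `R_{uv} = ∇_{[u,v]} - [∇_u, ∇_v]` of a connection on a Lie algebra. -/
def lorCurv {g : Type*} [LieRing g] [LieAlgebra ℝ g]
    (nabla : g →ₗ[ℝ] g →ₗ[ℝ] g) (u v w : g) : g :=
  nabla ⁅u, v⁆ w - nabla u (nabla v w) + nabla v (nabla u w)

set_option maxHeartbeats 4000000 in
theorem stmt_16 (μ : ℝ) (hμ : 0 < μ)
    (g : Type*) [LieRing g] [LieAlgebra ℝ g]
    (h : g →ₗ[ℝ] g →ₗ[ℝ] ℝ) (y1 y2 y3 : g)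
    (hsymm : ∀ u v, h u v = h v u)
    (h11 : h y1 y1 = 1) (h22 : h y2 y2 = 1) (h33 : h y3 y3 = -1)
    (h12 : h y1 y2 = 0) (h13 : h y1 y3 = 0) (h23 : h y2 y3 = 0)
    (b : Module.Basis (Fin 3) ℝ g) (hb0 : b 0 = y1) (hb1 : b 1 = y2) (hb2 : b 2 = y3)
    (hbr12 : ⁅y1, y2⁆ = (-(1 / Real.sqrt μ)) • y1)
    (hbr23 : ⁅y2, y3⁆ = (1 / Real.sqrt μ) • y3)
    (hbr31 : ⁅y3, y1⁆ = 0)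
    (nabla : g →ₗ[ℝ] g →ₗ[ℝ] g)
    (hK : ∀ u v w, 2 * h (nabla u v) w = h ⁅u, v⁆ w + h ⁅w, u⁆ v + h ⁅w, v⁆ u)
    (Ric : g →ₗ[ℝ] g)
    (hRic : ∀ u v, h (Ric u) v =
      h (lorCurv nabla u y1 v) y1 + h (lorCurv nabla u y2 v) y2 - h (lorCurv nabla u y3 v) y3) :
    Ric = (-(2 / μ)) • LinearMap.id ∧
    LinearMap.trace ℝ g Ric = -(6 / μ) ∧
    h (lorCurv nabla y1 y2 y1) y2 / (h y1 y1 * h y2 y2 - (h y1 y2) ^ 2) = -(1 / μ) ∧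
    h (lorCurv nabla y2 y3 y2) y3 / (h y2 y2 * h y3 y3 - (h y2 y3) ^ 2) = -(1 / μ) ∧
    h (lorCurv nabla y3 y1 y3) y1 / (h y3 y3 * h y1 y1 - (h y3 y1) ^ 2) = -(1 / μ) ∧
    ∀ u v : g, h u u * h v v - (h u v) ^ 2 ≠ 0 →
      h (lorCurv nabla u v u) v / (h u u * h v v - (h u v) ^ 2) = -(1 / μ) := by
  set s : ℝ := 1 / Real.sqrt μ with hs
  have hsqrt : Real.sqrt μ ≠ 0 := ne_of_gt (Real.sqrt_pos.2 hμ)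
  have hs2 : s ^ 2 = 1 / μ := by
    rw [hs, div_pow, one_pow, Real.sq_sqrt hμ.le]
  -- symmetric values
  have h21 : h y2 y1 = 0 := (hsymm _ _).trans h12
  have h31 : h y3 y1 = 0 := (hsymm _ _).trans h13
  have h32 : h y3 y2 = 0 := (hsymm _ _).trans h23
  -- brackets
  have br21 : ⁅y2, y1⁆ = s • y1 := by
    rw [← lie_skew, hbr12]; module
  have br32 : ⁅y3, y2⁆ = (-s) • y3 := by
    rw [← lie_skew, hbr23]; module
  have br13 : ⁅y1, y3⁆ = 0 := by
    rw [← lie_skew, hbr31]; simp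
  -- extensionality
  have hrep : ∀ z : g, ∃ p q r : ℝ, z = p • y1 + q • y2 + r • y3 := by
    intro z
    refine ⟨b.repr z 0, b.repr z 1, b.repr z 2, ?_⟩
    have := b.sum_repr z
    rw [Fin.sum_univ_three, hb0, hb1, hb2] at this
    exact this.symm
  have hext : ∀ x z : g, h x y1 = h z y1 → h x y2 = h z y2 → h x y3 = h z y3 → x = z := by
    intro x z e1 e2 e3
    obtain ⟨p, q, r, hx⟩ := hrep x
    obtain ⟨p', q', r', hz⟩ := hrep z
    have c1 : p = p' := by
      have := e1; rw [hx, hz] at this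
      simpa [h11, h21, h31] using this
    have c2 : q = q' := by
      have := e2; rw [hx, hz] at this
      simpa [h12, h22, h32] using this
    have c3 : r = r' := by
      have := e3; rw [hx, hz] at this
      have : -r = -r' := by simpa [h13, h23, h33] using this
      linarith
    rw [hx, hz, c1, c2, c3]
  have nab11 : nabla y1 y1 = s • y2 := by
    refine hext _ _ ?_ ?_ ?_ <;>
      [have hk := hK y1 y1 y1; have hk := hK y1 y1 y2; have hk := hK y1 y1 y3] <;>
      (simp only [lie_self, hbr12, br21, hbr23, br32, hbr31, br13, map_zero, LinearMap.zero_apply, map_smul, LinearMap.smul_apply, smul_eq_mul, zero_smul, smul_zero, h11, h12, h13, h21, h22, h23, h31, h32, h33] at hk ⊢; linarith)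
  have nab12 : nabla y1 y2 = (-s) • y1 := by
    refine hext _ _ ?_ ?_ ?_ <;>
      [have hk := hK y1 y2 y1; have hk := hK y1 y2 y2; have hk := hK y1 y2 y3] <;>
      (simp only [lie_self, hbr12, br21, hbr23, br32, hbr31, br13, map_zero, LinearMap.zero_apply, map_smul, LinearMap.smul_apply, smul_eq_mul, zero_smul, smul_zero, h11, h12, h13, h21, h22, h23, h31, h32, h33] at hk ⊢; linarith)
  have nab13 : nabla y1 y3 = (0:g) := by
    refine hext _ _ ?_ ?_ ?_ <;>
      [have hk := hK y1 y3 y1; have hk := hK y1 y3 y2; have hk := hK y1 y3 y3] <;>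
      (simp only [lie_self, hbr12, br21, hbr23, br32, hbr31, br13, map_zero, LinearMap.zero_apply, map_smul, LinearMap.smul_apply, smul_eq_mul, zero_smul, smul_zero, h11, h12, h13, h21, h22, h23, h31, h32, h33] at hk ⊢; linarith)
  have nab21 : nabla y2 y1 = (0:g) := by
    refine hext _ _ ?_ ?_ ?_ <;>
      [have hk := hK y2 y1 y1; have hk := hK y2 y1 y2; have hk := hK y2 y1 y3] <;>
      (simp only [lie_self, hbr12, br21, hbr23, br32, hbr31, br13, map_zero, LinearMap.zero_apply, map_smul, LinearMap.smul_apply, smul_eq_mul, zero_smul, smul_zero, h11, h12, h13, h21, h22, h23, h31, h32, h33] at hk ⊢; linarith)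
  have nab22 : nabla y2 y2 = (0:g) := by
    refine hext _ _ ?_ ?_ ?_ <;>
      [have hk := hK y2 y2 y1; have hk := hK y2 y2 y2; have hk := hK y2 y2 y3] <;>
      (simp only [lie_self, hbr12, br21, hbr23, br32, hbr31, br13, map_zero, LinearMap.zero_apply, map_smul, LinearMap.smul_apply, smul_eq_mul, zero_smul, smul_zero, h11, h12, h13, h21, h22, h23, h31, h32, h33] at hk ⊢; linarith)
  have nab23 : nabla y2 y3 = (0:g) := by
    refine hext _ _ ?_ ?_ ?_ <;>
      [have hk := hK y2 y3 y1; have hk := hK y2 y3 y2; have hk := hK y2 y3 y3] <;>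
      (simp only [lie_self, hbr12, br21, hbr23, br32, hbr31, br13, map_zero, LinearMap.zero_apply, map_smul, LinearMap.smul_apply, smul_eq_mul, zero_smul, smul_zero, h11, h12, h13, h21, h22, h23, h31, h32, h33] at hk ⊢; linarith)
  have nab31 : nabla y3 y1 = (0:g) := by
    refine hext _ _ ?_ ?_ ?_ <;>
      [have hk := hK y3 y1 y1; have hk := hK y3 y1 y2; have hk := hK y3 y1 y3] <;>
      (simp only [lie_self, hbr12, br21, hbr23, br32, hbr31, br13, map_zero, LinearMap.zero_apply, map_smul, LinearMap.smul_apply, smul_eq_mul, zero_smul, smul_zero, h11, h12, h13, h21, h22, h23, h31, h32, h33] at hk ⊢; linarith)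
  have nab32 : nabla y3 y2 = (-s) • y3 := by
    refine hext _ _ ?_ ?_ ?_ <;>
      [have hk := hK y3 y2 y1; have hk := hK y3 y2 y2; have hk := hK y3 y2 y3] <;>
      (simp only [lie_self, hbr12, br21, hbr23, br32, hbr31, br13, map_zero, LinearMap.zero_apply, map_smul, LinearMap.smul_apply, smul_eq_mul, zero_smul, smul_zero, h11, h12, h13, h21, h22, h23, h31, h32, h33] at hk ⊢; linarith)
  have nab33 : nabla y3 y3 = (-s) • y2 := by
    refine hext _ _ ?_ ?_ ?_ <;>
      [have hk := hK y3 y3 y1; have hk := hK y3 y3 y2; have hk := hK y3 y3 y3] <;>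
      (simp only [lie_self, hbr12, br21, hbr23, br32, hbr31, br13, map_zero, LinearMap.zero_apply, map_smul, LinearMap.smul_apply, smul_eq_mul, zero_smul, smul_zero, h11, h12, h13, h21, h22, h23, h31, h32, h33] at hk ⊢; linarith)
  have hval : ∀ p q r p' q' r' : ℝ,
      h (p • y1 + q • y2 + r • y3) (p' • y1 + q' • y2 + r' • y3) = p*p' + q*q' - r*r' := by
    intro p q r p' q' r'
    simp only [map_add, LinearMap.add_apply, map_smul, LinearMap.smul_apply, smul_eq_mul,
      h11, h12, h13, h21, h22, h23, h31, h32, h33]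
    ring
  have key0 : ∀ a0 a1 a2 c0 c1 c2 d0 d1 d2 e0 e1 e2 : ℝ,
      h (lorCurv nabla (a0 • y1 + a1 • y2 + a2 • y3) (c0 • y1 + c1 • y2 + c2 • y3)
        (d0 • y1 + d1 • y2 + d2 • y3)) (e0 • y1 + e1 • y2 + e2 • y3)
      = -(s^2) * ((a0*d0 + a1*d1 - a2*d2) * (c0*e0 + c1*e1 - c2*e2)
          - (c0*d0 + c1*d1 - c2*d2) * (a0*e0 + a1*e1 - a2*e2)) := by
    intro a0 a1 a2 c0 c1 c2 d0 d1 d2 e0 e1 e2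
    simp only [lorCurv, lie_add, add_lie, lie_smul, smul_lie, lie_self,
      hbr12, br21, hbr23, br32, hbr31, br13,
      map_add, LinearMap.add_apply, map_smul, LinearMap.smul_apply,
      map_sub, LinearMap.sub_apply, map_zero, LinearMap.zero_apply,
      nab11, nab12, nab13, nab21, nab22, nab23, nab31, nab32, nab33,
      smul_zero, zero_smul, add_zero, zero_add, smul_add, smul_smul, smul_neg, neg_smul,
      map_neg, LinearMap.neg_apply, neg_neg, mul_neg, neg_mul,
      smul_eq_mul, h11, h12, h13, h21, h22, h23, h31, h32, h33]
    ring
  have key4 : ∀ u v w x : g, h (lorCurv nabla u v w) x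
      = -(1/μ) * (h u w * h v x - h v w * h u x) := by
    intro u v w x
    obtain ⟨a0, a1, a2, rfl⟩ := hrep u
    obtain ⟨c0, c1, c2, rfl⟩ := hrep v
    obtain ⟨d0, d1, d2, rfl⟩ := hrep w
    obtain ⟨e0, e1, e2, rfl⟩ := hrep x
    rw [key0, hval, hval, hval, hval, ← hs2]
    try ring
  have hRicEq : Ric = (-(2 / μ)) • LinearMap.id := by
    refine b.ext fun i => ?_
    fin_cases i <;> simp only [hb0, hb1, hb2, Fin.isValue, LinearMap.smul_apply, LinearMap.id_apply] <;>
      refine hext _ _ ?_ ?_ ?_ <;>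
      · rw [hRic, key4, key4, key4]
        simp only [map_smul, LinearMap.smul_apply, smul_eq_mul,
          h11, h12, h13, h21, h22, h23, h31, h32, h33]
        ring
  refine ⟨hRicEq, ?_, ?_, ?_, ?_, ?_⟩
  · haveI : Module.Finite ℝ g := Module.Finite.of_basis b
    haveI : Module.Free ℝ g := Module.Free.of_basis b
    rw [hRicEq, map_smul, LinearMap.trace_id, smul_eq_mul]
    rw [Module.finrank_eq_card_basis b]
    simp
    ring
  · rw [key4, hsymm y2 y1, h11, h22, h12]
    norm_num [div_neg]
  · rw [key4, hsymm y3 y2, h22, h33, h23]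
    norm_num [div_neg]
  · rw [key4, hsymm y1 y3, h33, h11, h31]
    norm_num [div_neg]
  · intro u v hne
    rw [key4, hsymm v u]
    have hd : h u u * h v v - h u v * h u v = h u u * h v v - (h u v)^2 := by ring
    rw [hd, mul_div_assoc, div_self hne, mul_one]
end

section
/- Let b ∈ R and ε = ±1. The matrices T± = [[a,0,0],[0,b±1,1],[0,-1,b∓1]] satisfy: T+ and T- are not conjugate by any matrix in O(2,1) (the group of matrices P with P^t diag(1,1,-1) P = diag(1,1,-1)), even though they have the same characteristic polynomial. -/
/-!
If `P ∈ O(2,1)` conjugates `T₊` to `T₋`, then `Pᵀ J (T₊ - b) P = J (T₋ - b)`, so the symmetric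
matrices `J (T₊ - b) = diag(a - b, 0, 0) + v vᵀ` (with `v = (0, 1, 1)`) and
`J (T₋ - b) = diag(a - b, 0, 0) - w wᵀ` (with `w = (0, 1, -1)`) are congruent, and congruence
preserves semidefiniteness. For `b ≤ a` the first is positive semidefinite and the second is not;
for `a ≤ b` the second is negative semidefinite and the first is not.
-/

open Matrix

section Congruence

variable {n R : Type*} [Fintype n] [CommRing R] {J P A B : Matrix n n R}

theorem transpose_mul_mul_mul_eq (hJ : Pᵀ * J * P = J) (hAB : A * P = P * B) :
    Pᵀ * (J * A) * P = J * B :=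
  calc Pᵀ * (J * A) * P = Pᵀ * J * (A * P) := by simp only [Matrix.mul_assoc]
    _ = Pᵀ * J * P * B := by rw [hAB]; simp only [Matrix.mul_assoc]
    _ = J * B := by rw [hJ]

theorem posSemidef_mul_of_transpose_mul_mul_self_eq [PartialOrder R] [StarRing R] [TrivialStar R]
    (hJ : Pᵀ * J * P = J) (hAB : A * P = P * B) (hA : (J * A).PosSemidef) :
    (J * B).PosSemidef := by
  rw [← transpose_mul_mul_mul_eq hJ hAB, ← conjTranspose_eq_transpose_of_trivial]
  exact hA.conjTranspose_mul_mul_same P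

variable [DecidableEq n]

theorem isUnit_det_of_transpose_mul_mul_self_eq (hJ : Pᵀ * J * P = J) (hdet : IsUnit J.det) :
    IsUnit P.det := by
  have h := congrArg det hJ
  rw [det_mul, det_mul, det_transpose, mul_right_comm] at h
  exact IsUnit.of_mul_eq_one _ (hdet.mul_left_inj.mp (h.trans (one_mul _).symm))

theorem transpose_nonsing_inv_mul_mul_nonsing_inv (hJ : Pᵀ * J * P = J) (hP : IsUnit P.det) :
    P⁻¹ᵀ * J * P⁻¹ = J :=
  calc P⁻¹ᵀ * J * P⁻¹ = P⁻¹ᵀ * (Pᵀ * J * P) * P⁻¹ := by rw [hJ]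
    _ = (P * P⁻¹)ᵀ * J * (P * P⁻¹) := by rw [transpose_mul]; simp only [Matrix.mul_assoc]
    _ = J := by rw [mul_nonsing_inv _ hP, transpose_one, Matrix.one_mul, Matrix.mul_one]

theorem mul_nonsing_inv_eq_nonsing_inv_mul (hAB : A * P = P * B) (hP : IsUnit P.det) :
    B * P⁻¹ = P⁻¹ * A :=
  calc B * P⁻¹ = P⁻¹ * (P * B) * P⁻¹ := by
        rw [← Matrix.mul_assoc, nonsing_inv_mul _ hP, Matrix.one_mul]
    _ = P⁻¹ * A := by
        rw [← hAB, Matrix.mul_assoc, Matrix.mul_assoc, mul_nonsing_inv _ hP, Matrix.mul_one]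

theorem sub_smul_one_mul_eq (hAB : A * P = P * B) (μ : R) :
    (A - μ • 1) * P = P * (B - μ • 1) := by
  rw [Matrix.sub_mul, Matrix.mul_sub, hAB, Matrix.smul_mul, Matrix.mul_smul, Matrix.one_mul,
    Matrix.mul_one]

theorem smul_one_sub_mul_eq (hAB : A * P = P * B) (μ : R) :
    (μ • 1 - A) * P = P * (μ • 1 - B) := by
  rw [← neg_sub A, ← neg_sub B, Matrix.neg_mul, Matrix.mul_neg, sub_smul_one_mul_eq hAB]

end Congruence

def normalFormPlus (a b : ℝ) : Matrix (Fin 3) (Fin 3) ℝ := !![a, 0, 0; 0, b + 1, 1; 0, -1, b - 1]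
def normalFormMinus (a b : ℝ) : Matrix (Fin 3) (Fin 3) ℝ := !![a, 0, 0; 0, b - 1, 1; 0, -1, b + 1]
def minkowskiForm : Matrix (Fin 3) (Fin 3) ℝ := diagonal ![1, 1, -1]

theorem posSemidef_minkowskiForm_mul_normalFormPlus_sub {a b : ℝ} (hba : b ≤ a) :
    (minkowskiForm * (normalFormPlus a b - b • 1)).PosSemidef := by
  have h : minkowskiForm * (normalFormPlus a b - b • 1)
      = diagonal ![a - b, 0, 0] + vecMulVec ![0, 1, 1] (star ![0, 1, 1]) := by
    ext i j; fin_cases i <;> fin_cases j <;> simp [minkowskiForm, normalFormPlus, vecMulVec]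
  rw [h]
  refine .add (.diagonal fun i => ?_) (posSemidef_vecMulVec_self_star _)
  fin_cases i <;> simp [hba]

theorem posSemidef_minkowskiForm_mul_sub_normalFormMinus {a b : ℝ} (hab : a ≤ b) :
    (minkowskiForm * (b • 1 - normalFormMinus a b)).PosSemidef := by
  have h : minkowskiForm * (b • 1 - normalFormMinus a b)
      = diagonal ![b - a, 0, 0] + vecMulVec ![0, 1, -1] (star ![0, 1, -1]) := by
    ext i j; fin_cases i <;> fin_cases j <;> simp [minkowskiForm, normalFormMinus, vecMulVec]
  rw [h]
  refine .add (.diagonal fun i => ?_) (posSemidef_vecMulVec_self_star _)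
  fin_cases i <;> simp [hab]

theorem not_posSemidef_minkowskiForm_mul_normalFormMinus_sub (a b : ℝ) :
    ¬ (minkowskiForm * (normalFormMinus a b - b • 1)).PosSemidef := fun h => by
  have := h.diag_nonneg (i := 1)
  norm_num [minkowskiForm, normalFormMinus] at this

theorem not_posSemidef_minkowskiForm_mul_sub_normalFormPlus (a b : ℝ) :
    ¬ (minkowskiForm * (b • 1 - normalFormPlus a b)).PosSemidef := fun h => by
  have := h.diag_nonneg (i := 1)
  norm_num [minkowskiForm, normalFormPlus] at this

theorem charpoly_normalFormPlus_eq_charpoly_normalFormMinus (a b : ℝ) :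
    (normalFormPlus a b).charpoly = (normalFormMinus a b).charpoly := by
  simp only [Matrix.charpoly, Matrix.det_fin_three, charmatrix_apply]
  simp [normalFormPlus, normalFormMinus]
  ring

theorem stmt_18 (a b : ℝ) :
    (!![a, 0, 0; 0, b + 1, 1; 0, -1, b - 1]).charpoly
      = (!![a, 0, 0; 0, b - 1, 1; 0, -1, b + 1]).charpoly ∧
    ¬ ∃ P : Matrix (Fin 3) (Fin 3) ℝ,
        Pᵀ * Matrix.diagonal ![1, 1, -1] * P = Matrix.diagonal ![1, 1, -1] ∧
        P⁻¹ * !![a, 0, 0; 0, b + 1, 1; 0, -1, b - 1] * P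
          = !![a, 0, 0; 0, b - 1, 1; 0, -1, b + 1] := by
  refine ⟨charpoly_normalFormPlus_eq_charpoly_normalFormMinus a b, ?_⟩
  rintro ⟨P, hJ, hconj⟩
  change Pᵀ * minkowskiForm * P = minkowskiForm at hJ
  change P⁻¹ * normalFormPlus a b * P = normalFormMinus a b at hconj
  have hP : IsUnit P.det := isUnit_det_of_transpose_mul_mul_self_eq hJ <| by
    simp [minkowskiForm, det_diagonal, Fin.prod_univ_three]
  have hTP : normalFormPlus a b * P = P * normalFormMinus a b := by
    rw [← hconj, ← Matrix.mul_assoc, ← Matrix.mul_assoc, mul_nonsing_inv _ hP, Matrix.one_mul]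
  rcases le_total b a with hba | hab
  · exact not_posSemidef_minkowskiForm_mul_normalFormMinus_sub a b <|
      posSemidef_mul_of_transpose_mul_mul_self_eq hJ (sub_smul_one_mul_eq hTP b)
        (posSemidef_minkowskiForm_mul_normalFormPlus_sub hba)
  · exact not_posSemidef_minkowskiForm_mul_sub_normalFormPlus a b <|
      posSemidef_mul_of_transpose_mul_mul_self_eq
        (transpose_nonsing_inv_mul_mul_nonsing_inv hJ hP)
        (smul_one_sub_mul_eq (mul_nonsing_inv_eq_nonsing_inv_mul hTP hP) b)
        (posSemidef_minkowskiForm_mul_sub_normalFormMinus hab)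
end
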